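/- (Two-party corollary.) Let W be a process on two parties A', B' and Z a process on two parties A'', B''. The product P = W ⊗ Z for the combined parties A = A'A'' and B = B'B'' is NOT a valid process if and only if: (1) both W and Z contain nonzero signalling terms; and (2) the Hilbert–Schmidt terms of W and Z taken together contain signalling terms of both directions (i.e., at least one A-to-B signalling term and at least one B-to-A signalling term among the nonzero terms of W and Z). -/

import Mathlib

/-!
Expanding both factors, `W ⊗ Z` has the coefficient `w t * z s` on the combined term `(t, s)`;
by trace-orthogonality of Hilbert–Schmidt terms these are its only coefficients, and `W ⊗ Z` is
automatically positive with the right trace. So the product fails to be a process exactly when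
some nonzero nontrivial combined term is in type on no party. A combined term is in type on a
party iff neither factor has output there and one of them has input there. Hence, `W` and `Z`
being processes, a bad term has `t` in type on a party `p` where `s` has output and `s` in type
on a party `q` where `t` has output, so `p ≠ q`: for two parties, one factor signals in one
direction and the other in the opposite one. Conversely, such a pair has output on both parties,
so its combined term is in type nowhere.
-/

open Matrix Kronecker BigOperators
open scoped ComplexOrder

namespace ProcessPaper

/-- A (generalized) Hilbert–Schmidt basis of operators on a finite-dimensional Hilbert
space with orthonormal basis indexed by `n`: a family of Hermitian matrices indexed by
`ι` (with `Fintype.card ι = (Fintype.card n) ^ 2`), whose distinguished element `σ 0`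
is the identity, whose other elements are traceless, which are mutually orthogonal
under the trace inner product, and which are all nonzero. -/
def IsHSBasis {n : Type*} [Fintype n] [DecidableEq n] {ι : Type*} [Fintype ι] [Zero ι]
    (σ : ι → Matrix n n ℂ) : Prop :=
  Fintype.card ι = (Fintype.card n) ^ 2 ∧
  (∀ i, (σ i).IsHermitian) ∧
  σ 0 = 1 ∧
  (∀ i, i ≠ 0 → (σ i).trace = 0) ∧
  (∀ i j, i ≠ j → (σ i * σ j).trace = 0) ∧
  (∀ i, σ i ≠ 0)

variable {P : Type*} [Fintype P] [DecidableEq P]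

section defs

variable {I O : P → Type*} [∀ p, Fintype (I p)] [∀ p, DecidableEq (I p)]
  [∀ p, Fintype (O p)] [∀ p, DecidableEq (O p)]
  {ιI ιO : P → Type*} [∀ p, Fintype (ιI p)] [∀ p, Zero (ιI p)]
  [∀ p, Fintype (ιO p)] [∀ p, Zero (ιO p)]

/-- The tensor product, over all parties, of party-local operators
(each party `p` carries the Hilbert space of its input system `I p`
tensored with its output system `O p`). -/
def tensorFamily (M : ∀ p, Matrix (I p × O p) (I p × O p) ℂ) :
    Matrix ((p : P) → I p × O p) ((p : P) → I p × O p) ℂ :=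
  fun x y => ∏ p, M p (x p) (y p)

/-- The Hilbert–Schmidt basis term with multi-index `t`:
`⨂_p σI p (t p).1 ⊗ σO p (t p).2`. -/
def hsTerm (σI : ∀ p, ιI p → Matrix (I p) (I p) ℂ)
    (σO : ∀ p, ιO p → Matrix (O p) (O p) ℂ)
    (t : ∀ p, ιI p × ιO p) :
    Matrix ((p : P) → I p × O p) ((p : P) → I p × O p) ℂ :=
  fun x y => ∏ p, σI p (t p).1 (x p).1 (y p).1 * σO p (t p).2 (x p).2 (y p).2

/-- The operator with Hilbert–Schmidt coefficients `w`. -/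
noncomputable def expand (σI : ∀ p, ιI p → Matrix (I p) (I p) ℂ)
    (σO : ∀ p, ιO p → Matrix (O p) (O p) ℂ)
    (w : (∀ p, ιI p × ιO p) → ℝ) :
    Matrix ((p : P) → I p × O p) ((p : P) → I p × O p) ℂ :=
  ∑ t : ∀ p, ιI p × ιO p, (w t : ℂ) • hsTerm σI σO t

end defs

section types

variable {ιI ιO : P → Type*} [∀ p, Zero (ιI p)] [∀ p, Zero (ιO p)]

/-- A term is trivial on party `p` if its indices on both the input and the output
system of `p` are zero (identity factor on party `p`). -/
def TrivialAt (t : ∀ p, ιI p × ιO p) (p : P) : Prop :=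
  (t p).1 = 0 ∧ (t p).2 = 0

/-- A term is in type on party `p` if it is nontrivial on the input system of `p`
and trivial (identity) on the output system of `p`. -/
def InTypeAt (t : ∀ p, ιI p × ιO p) (p : P) : Prop :=
  (t p).1 ≠ 0 ∧ (t p).2 = 0

/-- A term includes the out type on party `p` if it is nontrivial on the output
system of `p`. -/
def IncludesOutAt (t : ∀ p, ιI p × ιO p) (p : P) : Prop :=
  (t p).2 ≠ 0

/-- A term is nontrivial if it is nontrivial on some party
(i.e. it is not the identity term). -/
def NontrivialTerm (t : ∀ p, ιI p × ιO p) : Prop :=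
  ∃ p, ¬ TrivialAt t p

/-- The Oreshkov–Giarmatzi condition on Hilbert–Schmidt coefficients: every nonzero
nontrivial term is in type on at least one party. -/
def OGCoeffs (w : (∀ p, ιI p × ιO p) → ℝ) : Prop :=
  ∀ t, w t ≠ 0 → NontrivialTerm t → ∃ p, InTypeAt t p

end types

section process

variable {I O : P → Type*} [∀ p, Fintype (I p)] [∀ p, DecidableEq (I p)]
  [∀ p, Fintype (O p)] [∀ p, DecidableEq (O p)]
  {ιI ιO : P → Type*} [∀ p, Fintype (ιI p)] [∀ p, Zero (ιI p)]
  [∀ p, Fintype (ιO p)] [∀ p, Zero (ιO p)]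

/-- `W` is a valid process with Hilbert–Schmidt coefficients `w` (relative to the
Hilbert–Schmidt bases `σI`, `σO`): it is positive semidefinite, has trace equal to the
product `d_O` of the output dimensions, has expansion given by `w`, and every nonzero
nontrivial Hilbert–Schmidt term of it is in type on at least one party. -/
def IsProcessWith (σI : ∀ p, ιI p → Matrix (I p) (I p) ℂ)
    (σO : ∀ p, ιO p → Matrix (O p) (O p) ℂ)
    (W : Matrix ((p : P) → I p × O p) ((p : P) → I p × O p) ℂ)
    (w : (∀ p, ιI p × ιO p) → ℝ) : Prop :=
  W.PosSemidef ∧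
  W.trace = ∏ p, (Fintype.card (O p) : ℂ) ∧
  W = expand σI σO w ∧
  OGCoeffs w

/-- `W` is a valid process (relative to the Hilbert–Schmidt bases `σI`, `σO`). -/
def IsProcess (σI : ∀ p, ιI p → Matrix (I p) (I p) ℂ)
    (σO : ∀ p, ιO p → Matrix (O p) (O p) ℂ)
    (W : Matrix ((p : P) → I p × O p) ((p : P) → I p × O p) ℂ) : Prop :=
  ∃ w, IsProcessWith σI σO W w

end process

section product

variable {I' O' I'' O'' : P → Type*}

/-- The tensor product `P = W ⊗ Z` of an operator `W` for parties `A', B', …` and an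
operator `Z` for parties `A'', B'', …`, regarded as an operator for the combined
parties `A = A'A''` (input `a₁ = a₁'a₁''`, output `a₂ = a₂'a₂''`), `B = B'B''`, …. -/
def prodOp (W : Matrix ((p : P) → I' p × O' p) ((p : P) → I' p × O' p) ℂ)
    (Z : Matrix ((p : P) → I'' p × O'' p) ((p : P) → I'' p × O'' p) ℂ) :
    Matrix ((p : P) → (I' p × I'' p) × (O' p × O'' p))
      ((p : P) → (I' p × I'' p) × (O' p × O'' p)) ℂ :=
  fun x y =>
    W (fun p => ((x p).1.1, (x p).2.1)) (fun p => ((y p).1.1, (y p).2.1)) *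
    Z (fun p => ((x p).1.2, (x p).2.2)) (fun p => ((y p).1.2, (y p).2.2))

end product

/-- The Hilbert–Schmidt basis of a combined system, consisting of the tensor (Kronecker)
products of the basis elements of the two subsystems; its distinguished (identity)
element is the product of the two distinguished elements. -/
def prodBasis {n n' ι ι' : Type*} (σ : ι → Matrix n n ℂ) (σ' : ι' → Matrix n' n' ℂ) :
    ι × ι' → Matrix (n × n') (n × n') ℂ :=
  fun i => σ i.1 ⊗ₖ σ' i.2

section coeffs

variable {ιI' ιO' ιI'' ιO'' : P → Type*}

/-- The Hilbert–Schmidt coefficients of a tensor product `W ⊗ Z` in terms of the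
coefficients `w` of `W` and `z` of `Z`. -/
def prodCoeffs (w : (∀ p, ιI' p × ιO' p) → ℝ) (z : (∀ p, ιI'' p × ιO'' p) → ℝ) :
    (∀ p, (ιI' p × ιI'' p) × (ιO' p × ιO'' p)) → ℝ :=
  fun u => w (fun p => ((u p).1.1, (u p).2.1)) * z (fun p => ((u p).1.2, (u p).2.2))

/-- The multi-index of the tensor product of the term `t` of `W` and the term `s`
of `Z`, as a term for the combined parties. -/
def combineTerm (t : ∀ p, ιI' p × ιO' p) (s : ∀ p, ιI'' p × ιO'' p) :
    ∀ p, (ιI' p × ιI'' p) × (ιO' p × ιO'' p) :=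
  fun p => (((t p).1, (s p).1), ((t p).2, (s p).2))

end coeffs

section twoparty

variable {ιI ιO : Fin 2 → Type*} [∀ p, Zero (ιI p)] [∀ p, Zero (ιO p)]

/-- For two parties `A` (party `0`) and `B` (party `1`), an `A` to `B` signalling
term: a term of type `a₂b₁` or `a₁a₂b₁`, i.e. nontrivial on `a₂` and on `b₁` and
trivial on `b₂`. -/
def AtoBSig (t : ∀ p, ιI p × ιO p) : Prop :=
  (t 0).2 ≠ 0 ∧ (t 1).1 ≠ 0 ∧ (t 1).2 = 0

/-- A `B` to `A` signalling term: a term of type `a₁b₂` or `a₁b₁b₂`, i.e. nontrivial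
on `b₂` and on `a₁` and trivial on `a₂`. -/
def BtoASig (t : ∀ p, ιI p × ιO p) : Prop :=
  (t 1).2 ≠ 0 ∧ (t 0).1 ≠ 0 ∧ (t 0).2 = 0

end twoparty

section TraceOrthogonal

variable {n n' ι ι' : Type*} [Fintype n] [Fintype n']

def TraceOrthogonal (σ : ι → Matrix n n ℂ) : Prop :=
  ∀ i j, (σ i * σ j).trace = 0 ↔ i ≠ j

lemma IsHSBasis.traceOrthogonal [DecidableEq n] [Fintype ι] [Zero ι] {σ : ι → Matrix n n ℂ}
    (hσ : IsHSBasis σ) : TraceOrthogonal σ := by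
  obtain ⟨-, hherm, -, -, horth, hne⟩ := hσ
  refine fun i j => ⟨fun h0 hij => hne i ?_, horth i j⟩
  subst hij
  exact trace_conjTranspose_mul_self_eq_zero_iff.mp (by rwa [(hherm i).eq])

lemma TraceOrthogonal.prodBasis {σ : ι → Matrix n n ℂ} {σ' : ι' → Matrix n' n' ℂ}
    (hσ : TraceOrthogonal σ) (hσ' : TraceOrthogonal σ') :
    TraceOrthogonal (prodBasis σ σ') := fun i j => by
  rw [ProcessPaper.prodBasis, ProcessPaper.prodBasis, ← mul_kronecker_mul, trace_kronecker,
    mul_eq_zero, hσ, hσ', ← not_and_or, ← Prod.ext_iff]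

lemma TraceOrthogonal.sum_smul_injective [Fintype ι] {σ : ι → Matrix n n ℂ}
    (hσ : TraceOrthogonal σ) : Function.Injective fun c : ι → ℂ => ∑ i, c i • σ i := by
  intro c c' hcc'
  funext j
  have coeff : ∀ c : ι → ℂ, ((∑ i, c i • σ i) * σ j).trace = c j * (σ j * σ j).trace := by
    intro c
    rw [Finset.sum_mul, trace_sum, Finset.sum_eq_single j]
    · rw [smul_mul_assoc, trace_smul, smul_eq_mul]
    · intro i _ hij
      rw [smul_mul_assoc, trace_smul, (hσ i j).mpr hij, smul_zero]
    · simp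
  have hj : (σ j * σ j).trace ≠ 0 := fun h0 => (hσ j j).mp h0 rfl
  refine mul_right_cancel₀ hj ?_
  rw [← coeff, ← coeff]
  exact congrArg (fun M => (M * σ j).trace) hcc'

end TraceOrthogonal

section HilbertSchmidtTerms

variable {I O : P → Type*} {ιI ιO : P → Type*}
  {σI : ∀ p, ιI p → Matrix (I p) (I p) ℂ} {σO : ∀ p, ιO p → Matrix (O p) (O p) ℂ}

omit [DecidableEq P] in
lemma hsTerm_eq_tensorFamily (t : ∀ p, ιI p × ιO p) :
    hsTerm σI σO t = tensorFamily (fun p => σI p (t p).1 ⊗ₖ σO p (t p).2) :=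
  rfl

variable [∀ p, Fintype (I p)] [∀ p, Fintype (O p)]

lemma tensorFamily_mul_tensorFamily (M N : ∀ p, Matrix (I p × O p) (I p × O p) ℂ) :
    tensorFamily M * tensorFamily N = tensorFamily (fun p => M p * N p) := by
  funext x y
  simp only [tensorFamily, mul_apply, Fintype.prod_sum, Finset.prod_mul_distrib]

lemma trace_tensorFamily (M : ∀ p, Matrix (I p × O p) (I p × O p) ℂ) :
    (tensorFamily M).trace = ∏ p, (M p).trace :=
  (Fintype.prod_sum fun p a => M p a a).symm

lemma trace_hsTerm_mul_hsTerm (t t' : ∀ p, ιI p × ιO p) :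
    (hsTerm σI σO t * hsTerm σI σO t').trace
      = ∏ p, (σI p (t p).1 * σI p (t' p).1).trace * (σO p (t p).2 * σO p (t' p).2).trace := by
  simp only [hsTerm_eq_tensorFamily, tensorFamily_mul_tensorFamily, trace_tensorFamily,
    ← mul_kronecker_mul, trace_kronecker]

lemma TraceOrthogonal.hsTerm (hI : ∀ p, TraceOrthogonal (σI p))
    (hO : ∀ p, TraceOrthogonal (σO p)) : TraceOrthogonal (hsTerm σI σO) := fun t t' => by
  simp only [trace_hsTerm_mul_hsTerm, Finset.prod_eq_zero_iff, Finset.mem_univ, true_and,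
    mul_eq_zero, Function.ne_iff, Ne, Prod.ext_iff, not_and_or]
  exact exists_congr fun p => or_congr (hI p _ _) (hO p _ _)

lemma expand_injective [∀ p, Fintype (ιI p)] [∀ p, Zero (ιI p)] [∀ p, Fintype (ιO p)]
    [∀ p, Zero (ιO p)] (hI : ∀ p, TraceOrthogonal (σI p)) (hO : ∀ p, TraceOrthogonal (σO p)) :
    Function.Injective (expand σI σO) := fun _ _ h =>
  funext fun t => Complex.ofReal_injective
    (congrFun ((TraceOrthogonal.hsTerm hI hO).sum_smul_injective h) t)

end HilbertSchmidtTerms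

section ProductOperator

variable {I' O' I'' O'' : P → Type*}

def piProdProdEquiv {α β γ δ : P → Type*} :
    (∀ p, (α p × β p) × (γ p × δ p)) ≃ (∀ p, α p × γ p) × (∀ p, β p × δ p) where
  toFun u := (fun p => ((u p).1.1, (u p).2.1), fun p => ((u p).1.2, (u p).2.2))
  invFun v := fun p => (((v.1 p).1, (v.2 p).1), ((v.1 p).2, (v.2 p).2))

omit [Fintype P] [DecidableEq P] in
lemma prodOp_eq_submatrix_kronecker
    (W : Matrix ((p : P) → I' p × O' p) ((p : P) → I' p × O' p) ℂ)
    (Z : Matrix ((p : P) → I'' p × O'' p) ((p : P) → I'' p × O'' p) ℂ) :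
    prodOp W Z = (W ⊗ₖ Z).submatrix piProdProdEquiv piProdProdEquiv :=
  rfl

variable [∀ p, Fintype (I' p)] [∀ p, Fintype (O' p)] [∀ p, Fintype (I'' p)]
  [∀ p, Fintype (O'' p)] {W : Matrix ((p : P) → I' p × O' p) ((p : P) → I' p × O' p) ℂ}
  {Z : Matrix ((p : P) → I'' p × O'' p) ((p : P) → I'' p × O'' p) ℂ}

omit [DecidableEq P] in
lemma posSemidef_prodOp (hW : W.PosSemidef) (hZ : Z.PosSemidef) : (prodOp W Z).PosSemidef := by
  rw [prodOp_eq_submatrix_kronecker]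
  exact (hW.kronecker hZ).submatrix _

lemma trace_prodOp : (prodOp W Z).trace = W.trace * Z.trace := by
  rw [prodOp_eq_submatrix_kronecker, ← trace_kronecker]
  exact Equiv.sum_comp piProdProdEquiv fun j => (W ⊗ₖ Z) j j

end ProductOperator

section ProductExpansion

variable {I' O' I'' O'' : P → Type*} {ιI' ιO' ιI'' ιO'' : P → Type*}
  (σI' : ∀ p, ιI' p → Matrix (I' p) (I' p) ℂ) (σO' : ∀ p, ιO' p → Matrix (O' p) (O' p) ℂ)
  (σI'' : ∀ p, ιI'' p → Matrix (I'' p) (I'' p) ℂ) (σO'' : ∀ p, ιO'' p → Matrix (O'' p) (O'' p) ℂ)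

omit [DecidableEq P] in
lemma hsTerm_prodBasis_combineTerm (t : ∀ p, ιI' p × ιO' p) (s : ∀ p, ιI'' p × ιO'' p) :
    hsTerm (fun p => prodBasis (σI' p) (σI'' p)) (fun p => prodBasis (σO' p) (σO'' p))
        (combineTerm t s) = prodOp (hsTerm σI' σO' t) (hsTerm σI'' σO'' s) := by
  funext x y
  simp only [hsTerm, prodOp, prodBasis, combineTerm, kroneckerMap_apply,
    ← Finset.prod_mul_distrib]
  exact Finset.prod_congr rfl fun p _ => by ring

variable [∀ p, Fintype (ιI' p)] [∀ p, Fintype (ιO' p)] [∀ p, Fintype (ιI'' p)]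
  [∀ p, Fintype (ιO'' p)]

lemma prodOp_expand (w : (∀ p, ιI' p × ιO' p) → ℝ) (z : (∀ p, ιI'' p × ιO'' p) → ℝ) :
    prodOp (expand σI' σO' w) (expand σI'' σO'' z)
      = expand (fun p => prodBasis (σI' p) (σI'' p)) (fun p => prodBasis (σO' p) (σO'' p))
          (prodCoeffs w z) := by
  funext x y
  simp only [prodOp, expand, Matrix.sum_apply, Matrix.smul_apply, smul_eq_mul,
    Finset.sum_mul_sum, ← Fintype.sum_prod_type']
  refine Fintype.sum_equiv piProdProdEquiv.symm _ _ fun ⟨t, s⟩ => ?_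
  rw [show piProdProdEquiv.symm (t, s) = combineTerm t s from rfl,
    hsTerm_prodBasis_combineTerm]
  simp only [prodCoeffs, combineTerm, prodOp, Complex.ofReal_mul]
  ring

variable [∀ p, Fintype (I' p)] [∀ p, Fintype (O' p)] [∀ p, Fintype (I'' p)]
  [∀ p, Fintype (O'' p)] [∀ p, Zero (ιI' p)] [∀ p, Zero (ιO' p)] [∀ p, Zero (ιI'' p)]
  [∀ p, Zero (ιO'' p)]

variable {σI' σO' σI'' σO''} in
lemma isProcess_prodOp_iff (hI' : ∀ p, TraceOrthogonal (σI' p))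
    (hO' : ∀ p, TraceOrthogonal (σO' p)) (hI'' : ∀ p, TraceOrthogonal (σI'' p))
    (hO'' : ∀ p, TraceOrthogonal (σO'' p))
    {W : Matrix ((p : P) → I' p × O' p) ((p : P) → I' p × O' p) ℂ}
    {Z : Matrix ((p : P) → I'' p × O'' p) ((p : P) → I'' p × O'' p) ℂ}
    {w : (∀ p, ιI' p × ιO' p) → ℝ} {z : (∀ p, ιI'' p × ιO'' p) → ℝ} (hW : IsProcessWith σI' σO' W w)
    (hZ : IsProcessWith σI'' σO'' Z z) :
    IsProcess (fun p => prodBasis (σI' p) (σI'' p)) (fun p => prodBasis (σO' p) (σO'' p))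
        (prodOp W Z) ↔ OGCoeffs (prodCoeffs w z) := by
  obtain ⟨hWpsd, hWtr, hWexp, -⟩ := hW
  obtain ⟨hZpsd, hZtr, hZexp, -⟩ := hZ
  have hexp := prodOp_expand σI' σO' σI'' σO'' w z
  rw [← hWexp, ← hZexp] at hexp
  constructor
  · rintro ⟨c, -, -, hc, hog⟩
    rwa [← expand_injective (fun p => (hI' p).prodBasis (hI'' p))
      (fun p => (hO' p).prodBasis (hO'' p)) (hexp.symm.trans hc)] at hog
  · refine fun hog => ⟨_, posSemidef_prodOp hWpsd hZpsd, ?_, hexp, hog⟩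
    rw [trace_prodOp, hWtr, hZtr, ← Finset.prod_mul_distrib]
    simp only [Fintype.card_prod, Nat.cast_mul]

end ProductExpansion

section CombinedTerms

omit [Fintype P] [DecidableEq P]

variable {ιI' ιO' ιI'' ιO'' : P → Type*} [∀ p, Zero (ιI' p)] [∀ p, Zero (ιO' p)]
  [∀ p, Zero (ιI'' p)] [∀ p, Zero (ιO'' p)] {t : ∀ p, ιI' p × ιO' p}
  {s : ∀ p, ιI'' p × ιO'' p} {w : (∀ p, ιI' p × ιO' p) → ℝ} {z : (∀ p, ιI'' p × ιO'' p) → ℝ}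

lemma inTypeAt_combineTerm_iff {p : P} :
    InTypeAt (combineTerm t s) p ↔ ((t p).1 ≠ 0 ∨ (s p).1 ≠ 0) ∧ (t p).2 = 0 ∧ (s p).2 = 0 := by
  simp only [InTypeAt, combineTerm, Ne, Prod.mk_eq_zero, not_and_or]

lemma nontrivialTerm_combineTerm_iff :
    NontrivialTerm (combineTerm t s) ↔ NontrivialTerm t ∨ NontrivialTerm s := by
  simp only [NontrivialTerm, TrivialAt, combineTerm, Prod.mk_eq_zero, ← exists_or]
  exact exists_congr fun p => by tauto

lemma not_OGCoeffs_prodCoeffs_iff :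
    ¬ OGCoeffs (prodCoeffs w z) ↔ ∃ t s, w t ≠ 0 ∧ z s ≠ 0 ∧
      NontrivialTerm (combineTerm t s) ∧ ∀ p, ¬ InTypeAt (combineTerm t s) p := by
  simp only [OGCoeffs, not_forall, not_exists, exists_prop]
  constructor
  · rintro ⟨u, hu, hnt, hp⟩
    exact ⟨(piProdProdEquiv u).1, (piProdProdEquiv u).2, left_ne_zero_of_mul hu,
      right_ne_zero_of_mul hu, hnt, hp⟩
  · rintro ⟨t, s, hwt, hzs, hnt, hp⟩
    exact ⟨combineTerm t s, mul_ne_zero hwt hzs, hnt, hp⟩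

lemma exists_crossed_outputs (hw : OGCoeffs w) (hz : OGCoeffs z) (hwt : w t ≠ 0) (hzs : z s ≠ 0)
    (hnt : NontrivialTerm (combineTerm t s)) (hbad : ∀ p, ¬ InTypeAt (combineTerm t s) p) :
    ∃ p q, InTypeAt t p ∧ (s p).2 ≠ 0 ∧ InTypeAt s q ∧ (t q).2 ≠ 0 := by
  have out_s : ∀ p, InTypeAt t p → (s p).2 ≠ 0 := fun p hp hs =>
    hbad p (inTypeAt_combineTerm_iff.2 ⟨Or.inl hp.1, hp.2, hs⟩)
  have out_t : ∀ q, InTypeAt s q → (t q).2 ≠ 0 := fun q hq ht =>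
    hbad q (inTypeAt_combineTerm_iff.2 ⟨Or.inr hq.1, ht, hq.2⟩)
  rcases nontrivialTerm_combineTerm_iff.1 hnt with ht | hs
  · obtain ⟨p, hp⟩ := hw t hwt ht
    obtain ⟨q, hq⟩ := hz s hzs ⟨p, fun h => out_s p hp h.2⟩
    exact ⟨p, q, hp, out_s p hp, hq, out_t q hq⟩
  · obtain ⟨q, hq⟩ := hz s hzs hs
    obtain ⟨p, hp⟩ := hw t hwt ⟨q, fun h => out_t q hq h.2⟩
    exact ⟨p, q, hp, out_s p hp, hq, out_t q hq⟩

end CombinedTerms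

section TwoParties

variable {ιI' ιO' ιI'' ιO'' : Fin 2 → Type*} [∀ p, Zero (ιI' p)] [∀ p, Zero (ιO' p)]
  [∀ p, Zero (ιI'' p)] [∀ p, Zero (ιO'' p)] {w : (∀ p, ιI' p × ιO' p) → ℝ}
  {z : (∀ p, ιI'' p × ιO'' p) → ℝ}

lemma not_OGCoeffs_prodCoeffs_iff_of_two_parties (hw : OGCoeffs w) (hz : OGCoeffs z) :
    ¬ OGCoeffs (prodCoeffs w z) ↔
      ∃ t s, w t ≠ 0 ∧ z s ≠ 0 ∧ ((AtoBSig t ∧ BtoASig s) ∨ (BtoASig t ∧ AtoBSig s)) := by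
  rw [not_OGCoeffs_prodCoeffs_iff]
  constructor
  · rintro ⟨t, s, hwt, hzs, hnt, hbad⟩
    obtain ⟨p, q, hp, hsp, hq, htq⟩ := exists_crossed_outputs hw hz hwt hzs hnt hbad
    have hpq : p ≠ q := fun h => hsp (h ▸ hq.2)
    refine ⟨t, s, hwt, hzs, ?_⟩
    fin_cases p <;> fin_cases q
    · exact absurd rfl hpq
    · exact Or.inr ⟨⟨htq, hp⟩, ⟨hsp, hq⟩⟩
    · exact Or.inl ⟨⟨htq, hp⟩, ⟨hsp, hq⟩⟩
    · exact absurd rfl hpq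
  · rintro ⟨t, s, hwt, hzs, h⟩
    have hout : ∀ p, (t p).2 ≠ 0 ∨ (s p).2 ≠ 0 := by
      rcases h with ⟨⟨ht0, -⟩, ⟨hs1, -⟩⟩ | ⟨⟨ht1, -⟩, ⟨hs0, -⟩⟩ <;> intro p <;> fin_cases p <;>
        tauto
    refine ⟨t, s, hwt, hzs, ⟨0, fun h0 => ?_⟩, fun p hp => ?_⟩
    · exact (hout 0).elim (· (congrArg Prod.fst h0.2)) (· (congrArg Prod.snd h0.2))
    · obtain ⟨-, htp, hsp⟩ := inTypeAt_combineTerm_iff.1 hp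
      exact (hout p).elim (· htp) (· hsp)

end TwoParties

lemma exists_opposite_pair_iff {α β : Type*} {N A B : α → Prop} {N' A' B' : β → Prop} :
    (((∃ a, N a ∧ (A a ∨ B a)) ∧ (∃ b, N' b ∧ (A' b ∨ B' b))) ∧
        ((∃ a, N a ∧ A a) ∨ (∃ b, N' b ∧ A' b)) ∧ ((∃ a, N a ∧ B a) ∨ (∃ b, N' b ∧ B' b))) ↔
      ∃ a b, N a ∧ N' b ∧ ((A a ∧ B' b) ∨ (B a ∧ A' b)) := by
  grind

variable {I' O' I'' O'' : Fin 2 → Type*}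
  [∀ p, Fintype (I' p)] [∀ p, DecidableEq (I' p)]
  [∀ p, Fintype (O' p)] [∀ p, DecidableEq (O' p)]
  [∀ p, Fintype (I'' p)] [∀ p, DecidableEq (I'' p)]
  [∀ p, Fintype (O'' p)] [∀ p, DecidableEq (O'' p)]
  {ιI' ιO' ιI'' ιO'' : Fin 2 → Type*}
  [∀ p, Fintype (ιI' p)] [∀ p, Zero (ιI' p)]
  [∀ p, Fintype (ιO' p)] [∀ p, Zero (ιO' p)]
  [∀ p, Fintype (ιI'' p)] [∀ p, Zero (ιI'' p)]
  [∀ p, Fintype (ιO'' p)] [∀ p, Zero (ιO'' p)]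

/-- **Two-party corollary.** Let `W` be a process on the two parties `A'`, `B'` and `Z`
a process on the two parties `A''`, `B''` (with Hilbert–Schmidt coefficients `w`, `z`;
party `0` is the `A`-type party and party `1` the `B`-type party). The product
`P = W ⊗ Z` for the combined parties `A = A'A''` and `B = B'B''` is NOT a valid
process if and only if: (1) both `W` and `Z` contain nonzero signalling terms; and
(2) the Hilbert–Schmidt terms of `W` and `Z` taken together contain signalling terms
of both directions (at least one `A`-to-`B` signalling term and at least one
`B`-to-`A` signalling term among the nonzero terms of `W` and `Z`). -/
theorem statement5
    (σI' : ∀ p, ιI' p → Matrix (I' p) (I' p) ℂ)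
    (σO' : ∀ p, ιO' p → Matrix (O' p) (O' p) ℂ)
    (σI'' : ∀ p, ιI'' p → Matrix (I'' p) (I'' p) ℂ)
    (σO'' : ∀ p, ιO'' p → Matrix (O'' p) (O'' p) ℂ)
    (hσI' : ∀ p, IsHSBasis (σI' p)) (hσO' : ∀ p, IsHSBasis (σO' p))
    (hσI'' : ∀ p, IsHSBasis (σI'' p)) (hσO'' : ∀ p, IsHSBasis (σO'' p))
    (W : Matrix ((p : Fin 2) → I' p × O' p) ((p : Fin 2) → I' p × O' p) ℂ)
    (Z : Matrix ((p : Fin 2) → I'' p × O'' p) ((p : Fin 2) → I'' p × O'' p) ℂ)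
    (w : (∀ p, ιI' p × ιO' p) → ℝ) (z : (∀ p, ιI'' p × ιO'' p) → ℝ)
    (hW : IsProcessWith σI' σO' W w) (hZ : IsProcessWith σI'' σO'' Z z) :
    ¬ IsProcess (fun p => prodBasis (σI' p) (σI'' p))
        (fun p => prodBasis (σO' p) (σO'' p)) (prodOp W Z)
      ↔ ((∃ t, w t ≠ 0 ∧ (AtoBSig t ∨ BtoASig t)) ∧
         (∃ s, z s ≠ 0 ∧ (AtoBSig s ∨ BtoASig s))) ∧
        ((∃ t, w t ≠ 0 ∧ AtoBSig t) ∨ (∃ s, z s ≠ 0 ∧ AtoBSig s)) ∧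
        ((∃ t, w t ≠ 0 ∧ BtoASig t) ∨ (∃ s, z s ≠ 0 ∧ BtoASig s)) := by
  rw [isProcess_prodOp_iff (fun p => (hσI' p).traceOrthogonal)
      (fun p => (hσO' p).traceOrthogonal) (fun p => (hσI'' p).traceOrthogonal)
      (fun p => (hσO'' p).traceOrthogonal) hW hZ,
    not_OGCoeffs_prodCoeffs_iff_of_two_parties hW.2.2.2 hZ.2.2.2]
  exact exists_opposite_pair_iff.symm

end ProcessPaper
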